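/- Define u : ℝ → ℝ by u(x) = cos x for |x| ≤ π/2 and u(x) = 0 for |x| > π/2. Then for every smooth compactly supported function φ : ℝ → ℝ, ∫_ℝ u(x) φ''(x) dx = −∫_ℝ u(x) φ(x) dx + φ(π/2) + φ(−π/2). (This identity states that u is a distributional solution of −u'' + (V ⊗ δ_Γ)u = u for Γ = {−π/2, 0, π/2} with the potential V given by (Vw)(±π/2) = w(0) and (Vw)(0) = w(π/2)+w(−π/2); that is, λ = ±1 is a real resonance with compactly supported resonant state u, the paper's one-dimensional example.) -/

import Mathlib

open MeasureTheory Real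

noncomputable section

/-- The resonant state `u(x) = cos x` for `|x| ≤ π/2`, `u(x) = 0` for `|x| > π/2`. -/
def resonantState (x : ℝ) : ℝ := if |x| ≤ π / 2 then Real.cos x else 0

/-- one-dimensional real resonance example of Section 6.
The compactly supported function `u` above is a distributional solution of
`−u'' + (V ⊗ δ_Γ)u = u` for `Γ = {−π/2, 0, π/2}` with the stated potential `V`:
for every test function `φ`,
`∫ u φ'' = −∫ u φ + φ(π/2) + φ(−π/2)`. -/
theorem resonantState_distributional_eq
    (φ : ℝ → ℝ) (hφ : ContDiff ℝ (⊤ : ℕ∞) φ) (hφc : HasCompactSupport φ) :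
    ∫ x : ℝ, resonantState x * deriv (deriv φ) x =
      -(∫ x : ℝ, resonantState x * φ x) + φ (π / 2) + φ (-(π / 2)) := by
  have hle : -(π / 2) ≤ (π / 2 : ℝ) := by
    have := Real.pi_pos; linarith
  have hφ' : ContDiff ℝ (⊤ : ℕ∞) φ := hφ.of_le (by simp)
  have hφ1 : ContDiff ℝ (⊤ : ℕ∞) (deriv φ) := (contDiff_infty_iff_deriv.mp hφ').2
  have hφ2 : Continuous (deriv (deriv φ)) := (contDiff_infty_iff_deriv.mp hφ1).2.continuous
  have hφc0 : Continuous φ := hφ.continuous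
  have hφc1 : Continuous (deriv φ) := hφ1.continuous
  have hd : ∀ x : ℝ, HasDerivAt φ (deriv φ x) x := fun x =>
    (hφ'.differentiable (by simp) x).hasDerivAt
  have hd1 : ∀ x : ℝ, HasDerivAt (deriv φ) (deriv (deriv φ) x) x := fun x =>
    (hφ1.differentiable (by simp) x).hasDerivAt
  -- reduce to interval integrals
  have key : ∀ f : ℝ → ℝ, Continuous f →
      ∫ x : ℝ, resonantState x * f x
        = ∫ x in (-(π/2))..(π/2), Real.cos x * f x := by
    intro f hf
    have h1 : ∀ x, resonantState x * f x
        = Set.indicator (Set.Icc (-(π/2)) (π/2)) (fun x => Real.cos x * f x) x := by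
      intro x
      simp only [resonantState, Set.indicator_apply, Set.mem_Icc, ← abs_le]
      split_ifs with h
      · rfl
      · simp
    rw [show (fun x => resonantState x * f x) = _ from funext h1]
    rw [MeasureTheory.integral_indicator measurableSet_Icc,
      MeasureTheory.integral_Icc_eq_integral_Ioc,
      ← intervalIntegral.integral_of_le hle]
  rw [key _ hφ2, key _ hφc0]
  have hcos : ∀ x ∈ Set.uIcc (-(π/2)) (π/2), HasDerivAt Real.cos (-Real.sin x) x :=
    fun x _ => Real.hasDerivAt_cos x
  have hsin : ∀ x ∈ Set.uIcc (-(π/2)) (π/2), HasDerivAt Real.sin (Real.cos x) x :=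
    fun x _ => Real.hasDerivAt_sin x
  have ibp1 : ∫ x in (-(π/2))..(π/2), Real.cos x * deriv (deriv φ) x
      = Real.cos (π/2) * deriv φ (π/2) - Real.cos (-(π/2)) * deriv φ (-(π/2))
        - ∫ x in (-(π/2))..(π/2), (-Real.sin x) * deriv φ x := by
    exact intervalIntegral.integral_mul_deriv_eq_deriv_mul hcos
      (fun x _ => hd1 x)
      ((Real.continuous_sin.neg).intervalIntegrable _ _)
      (hφ2.intervalIntegrable _ _)
  have ibp2 : ∫ x in (-(π/2))..(π/2), Real.sin x * deriv φ x
      = Real.sin (π/2) * φ (π/2) - Real.sin (-(π/2)) * φ (-(π/2))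
        - ∫ x in (-(π/2))..(π/2), Real.cos x * φ x := by
    exact intervalIntegral.integral_mul_deriv_eq_deriv_mul hsin
      (fun x _ => hd x)
      (Real.continuous_cos.intervalIntegrable _ _)
      (hφc1.intervalIntegrable _ _)
  have hneg : ∫ x in (-(π/2))..(π/2), (-Real.sin x) * deriv φ x
      = -∫ x in (-(π/2))..(π/2), Real.sin x * deriv φ x := by
    rw [← intervalIntegral.integral_neg]
    congr 1; ext x; ring
  rw [ibp1, hneg, ibp2]
  simp [Real.cos_pi_div_two, Real.sin_pi_div_two]
  ring
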